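/- Let q = r^2 with r an odd prime power, θ a primitive element of F_q, and q − 1 = e_1 f_1 = e_2 f_2 two factorizations into positive integers; set D_1 = e_1/gcd(e_1,e_2), D_2 = e_2/gcd(e_1,e_2), α = θ^{e_1}, β = θ^{e_2}, γ = θ^{e_1/2}, A = ⟨α⟩, B = ⟨β⟩. Suppose there exists an integer l ≥ 2 with e_1 ≡ 2^l (mod 2^{l+1}) and 2^l | e_2, and that 2e_2 | e_1(r−1) and e_1 | e_2(r+1). Let 1 ≤ s ≤ D_1 and 1 ≤ t ≤ D_2, let i_1, …, i_s be integers pairwise distinct modulo D_1 and j_1, …, j_t be integers pairwise distinct modulo D_2, and set S = (⋃_{μ=1}^{s} β^{i_μ} A) ∪ (⋃_{ν=1}^{t} γ^{2j_ν + 1} B), a subset of F_q^* of size s·f_1 + t·f_2. Then for every element a of the form a = β^{i_λ} α^j with 1 ≤ λ ≤ s and j an integer, one has η(L_S(a)) = (−1)^{(s−1)(r+1)/2}, where L_S(a) = ∏_{b ∈ S, b ≠ a} (a − b). -/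

import Mathlib

open Finset Polynomial

section Helpers

variable {K : Type*} [Field K] [DecidableEq K]

lemma prod_sub_nthRoots {f : ℕ} {ζ : K} (hζ : IsPrimitiveRoot ζ f) (hf : 0 < f) (x : K) :
    ∏ u ∈ nthRootsFinset f (1 : K), (x - u) = x ^ f - 1 := by
  have h := congrArg (Polynomial.eval x) (X_pow_sub_one_eq_prod hf hζ)
  simpa [eval_prod] using h.symm

lemma prod_sub_nthRoots_erase {f : ℕ} {ζ : K} (hζ : IsPrimitiveRoot ζ f) (hf : 0 < f)
    {x : K} (hx : x ^ f = 1) :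
    ∏ u ∈ (nthRootsFinset f (1 : K)).erase x, (x - u) = f * x ^ (f - 1) := by
  have hxm : x ∈ nthRootsFinset f (1 : K) := (mem_nthRootsFinset hf _).2 hx
  have hfull : (X ^ f - 1 : K[X]) = (X - C x) * ∏ u ∈ (nthRootsFinset f (1 : K)).erase x, (X - C u) := by
    rw [X_pow_sub_one_eq_prod hf hζ, ← Finset.mul_prod_erase _ _ hxm]
  have hgeom : (X ^ f - 1 : K[X]) = (∑ i ∈ range f, X ^ i * (C x) ^ (f - 1 - i)) * (X - C x) := by
    rw [geom_sum₂_mul, ← C_pow, hx, C_1]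
  have hcancel : (∏ u ∈ (nthRootsFinset f (1 : K)).erase x, (X - C u))
      = ∑ i ∈ range f, X ^ i * (C x) ^ (f - 1 - i) := by
    have hne : (X - C x : K[X]) ≠ 0 := X_sub_C_ne_zero x
    apply mul_left_cancel₀ hne
    rw [← hfull, hgeom]; ring
  have h := congrArg (Polynomial.eval x) hcancel
  simp only [eval_prod, eval_sub, eval_X, eval_C, eval_finset_sum, eval_mul, eval_pow] at h
  rw [h]
  have h2 : ∀ i ∈ range f, x ^ i * x ^ (f - 1 - i) = x ^ (f - 1) := by
    intro i hi
    rw [← pow_add]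
    congr 1
    have := mem_range.1 hi
    omega
  rw [Finset.sum_congr rfl h2, Finset.sum_const, card_range, nsmul_eq_mul]

lemma coset_prod {f : ℕ} {ζ : K} (hζ : IsPrimitiveRoot ζ f) (hf : 0 < f) (c : Kˣ) (x : K) :
    ∏ u ∈ (nthRootsFinset f (1 : K)).image (fun u => (c : K) * u), (x - u)
      = x ^ f - (c : K) ^ f := by
  have hinj : Function.Injective (fun u : K => (c : K) * u) := mul_right_injective₀ c.ne_zero
  rw [Finset.prod_image (fun a _ b _ h => hinj h)]
  have hc : (c : K) ≠ 0 := c.ne_zero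
  have h1 : ∀ u ∈ nthRootsFinset f (1 : K), (x - (c : K) * u) = (c : K) * ((c : K)⁻¹ * x - u) := by
    intro u _; field_simp
  rw [Finset.prod_congr rfl h1, Finset.prod_mul_distrib, Finset.prod_const,
    hζ.card_nthRootsFinset, prod_sub_nthRoots hζ hf]
  field_simp
  rw [div_pow, mul_sub, mul_one, mul_div_assoc', mul_div_cancel_left₀ _ (pow_ne_zero f hc)]

lemma coset_prod_erase {f : ℕ} {ζ : K} (hζ : IsPrimitiveRoot ζ f) (hf : 0 < f) (c : Kˣ)
    {x : K} (hx : x ^ f = 1) :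
    ∏ u ∈ ((nthRootsFinset f (1 : K)).image fun u => (c : K) * u).erase ((c : K) * x),
      ((c : K) * x - u) = f * ((c : K) * x) ^ (f - 1) := by
  have hinj : Function.Injective (fun u : K => (c : K) * u) := mul_right_injective₀ c.ne_zero
  rw [← Finset.image_erase hinj, Finset.prod_image (fun a _ b _ h => hinj h)]
  have h1 : ∀ u ∈ (nthRootsFinset f (1 : K)).erase x,
      ((c : K) * x - (c : K) * u) = (c : K) * (x - u) := by intro u _; ring
  rw [Finset.prod_congr rfl h1, Finset.prod_mul_distrib, Finset.prod_const,
    Finset.card_erase_of_mem ((mem_nthRootsFinset hf _).2 hx), hζ.card_nthRootsFinset,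
    prod_sub_nthRoots_erase hζ hf hx, mul_pow]
  ring

variable [Fintype K]

lemma chi_one_of_pow {a : K} (h2 : ringChar K ≠ 2) (ha : a ≠ 0)
    (h : a ^ (Fintype.card K / 2) = 1) : quadraticChar K a = 1 :=
  (quadraticChar_one_iff_isSquare ha).2 ((FiniteField.isSquare_iff h2 ha).2 h)

lemma chi_neg_one_of_pow {a : K} (h2 : ringChar K ≠ 2) (ha : a ≠ 0)
    (h : a ^ (Fintype.card K / 2) = -1) : quadraticChar K a = -1 := by
  apply quadraticChar_neg_one_iff_not_isSquare.2
  intro hs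
  have h1 := (FiniteField.isSquare_iff h2 ha).1 hs
  rw [h] at h1
  exact Ring.neg_one_ne_one_of_char_ne_two h2 h1

end Helpers

/-- The coset `g·H` of a subgroup `H ≤ Fˣ`, viewed as a subset of `F`. -/
def unitCoset {F : Type*} [Field F] (g : Fˣ) (H : Subgroup Fˣ) : Set F :=
  {x | ∃ h ∈ H, x = ((g * h : Fˣ) : F)}

set_option maxHeartbeats 3200000 in
open Finset in
/-- (Key step in the proof of Theorem 3.2.) For the evaluation set
`S = (⋃_μ β^{i_μ}A) ∪ (⋃_ν γ^{2j_ν+1}B)` and any `a = β^{i_λ}α^j`, one has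
`η(L_S(a)) = (−1)^{(s−1)(r+1)/2}`. -/
theorem eta_LS_on_first_cosets
    (r e1 f1 e2 f2 s t l : ℕ)
    (hr_odd : Odd r) (hr_pp : IsPrimePow r)
    (hq1 : r ^ 2 - 1 = e1 * f1) (hq2 : r ^ 2 - 1 = e2 * f2)
    (hl : 2 ≤ l) (he1 : e1 % 2 ^ (l + 1) = 2 ^ l) (he2 : 2 ^ l ∣ e2)
    (hdvd1 : 2 * e2 ∣ e1 * (r - 1)) (hdvd2 : e1 ∣ e2 * (r + 1))
    (hs1 : 1 ≤ s) (hs2 : s ≤ e1 / Nat.gcd e1 e2)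
    (ht1 : 1 ≤ t) (ht2 : t ≤ e2 / Nat.gcd e1 e2)
    (F : Type*) [Field F] [Fintype F] [DecidableEq F]
    (hF : Fintype.card F = r ^ 2)
    (θ : Fˣ) (hθ : ∀ x : Fˣ, x ∈ Subgroup.zpowers θ)
    (i : Fin s → ℤ) (j : Fin t → ℤ)
    (hi : ∀ a b : Fin s, a ≠ b →
      ¬ (i a ≡ i b [ZMOD ((e1 / Nat.gcd e1 e2 : ℕ) : ℤ)]))
    (hj : ∀ a b : Fin t, a ≠ b →
      ¬ (j a ≡ j b [ZMOD ((e2 / Nat.gcd e1 e2 : ℕ) : ℤ)]))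
    (S : Set F)
    (hS : S = (⋃ μ : Fin s, unitCoset ((θ ^ e2 : Fˣ) ^ (i μ)) (Subgroup.zpowers (θ ^ e1)))
        ∪ (⋃ ν : Fin t, unitCoset ((θ ^ (e1 / 2) : Fˣ) ^ (2 * j ν + 1))
              (Subgroup.zpowers (θ ^ e2)))) :
    ∀ (lam : Fin s) (k : ℤ),
      quadraticChar F
        (∏ b ∈ S.toFinite.toFinset.erase
            (((θ ^ e2 : Fˣ) ^ (i lam) * (θ ^ e1 : Fˣ) ^ k : Fˣ) : F),
          ((((θ ^ e2 : Fˣ) ^ (i lam) * (θ ^ e1 : Fˣ) ^ k : Fˣ) : F) - b)) =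
      (-1 : ℤ) ^ ((s - 1) * (r + 1) / 2) := by
  intro lam k
  ------------------------------------------------------------------
  -- ℕ groundwork
  ------------------------------------------------------------------
  have hr2 : 2 ≤ r := hr_pp.two_le
  have hr3 : 3 ≤ r := by
    rcases hr_odd with ⟨rr, hrr⟩; omega
  have hr1 : 1 ≤ r := by omega
  have hrr9 : 9 ≤ r ^ 2 := by nlinarith
  set N := r ^ 2 - 1 with hNdef
  have hN8 : 8 ≤ N := by omega
  have hNfact : N = (r - 1) * (r + 1) := by
    have h1 : 1 ≤ r ^ 2 := by omega
    rw [hNdef]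
    zify [hr1, h1]
    ring
  have hNpos : 0 < N := by omega
  have he1pos : 0 < e1 := by
    rcases Nat.eq_zero_or_pos e1 with h | h; · rw [h] at hq1; omega
    exact h
  have hf1pos : 0 < f1 := by
    rcases Nat.eq_zero_or_pos f1 with h | h; · rw [h] at hq1; omega
    exact h
  have he2pos : 0 < e2 := by
    rcases Nat.eq_zero_or_pos e2 with h | h; · rw [h] at hq2; omega
    exact h
  have hf2pos : 0 < f2 := by
    rcases Nat.eq_zero_or_pos f2 with h | h; · rw [h] at hq2; omega
    exact h
  set g := Nat.gcd e1 e2 with hgdef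
  have hgpos : 0 < g := Nat.gcd_pos_of_pos_left e2 he1pos
  set D1 := e1 / g with hD1def
  set D2 := e2 / g with hD2def
  have hD1 : g * D1 = e1 := Nat.mul_div_cancel' (Nat.gcd_dvd_left e1 e2)
  have hD2 : g * D2 = e2 := Nat.mul_div_cancel' (Nat.gcd_dvd_right e1 e2)
  have hcop : Nat.Coprime D1 D2 := Nat.coprime_div_gcd_div_gcd hgpos
  -- 2-adic structure of e1
  obtain ⟨o1, ho1odd, he1o⟩ : ∃ o1, Odd o1 ∧ e1 = 2 ^ l * o1 := by
    have hdm := Nat.div_add_mod e1 (2 ^ (l + 1))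
    rw [he1] at hdm
    refine ⟨2 * (e1 / 2 ^ (l + 1)) + 1, ⟨_, rfl⟩, ?_⟩
    set X := e1 / 2 ^ (l + 1) with hX
    rw [← hdm, pow_succ]
    ring
  have he1_2l : 2 ^ l ∣ e1 := ⟨o1, he1o⟩
  have h2e1 : 2 ∣ e1 := dvd_trans (dvd_pow_self 2 (by omega : l ≠ 0)) he1_2l
  have h2e2 : 2 ∣ e2 := dvd_trans (dvd_pow_self 2 (by omega : l ≠ 0)) he2
  set E := e1 / 2 with hEdef
  have hEe1 : 2 * E = e1 := Nat.mul_div_cancel' h2e1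
  have hE2 : E = 2 ^ (l - 1) * o1 := by
    have h1 : 2 ^ l = 2 * 2 ^ (l - 1) := by
      rw [← pow_succ']
      congr 1
      omega
    apply Nat.eq_of_mul_eq_mul_left (show 0 < 2 by norm_num)
    rw [hEe1, he1o, h1]
    ring
  -- c and w
  obtain ⟨c, hc⟩ := hdvd2
  have h2r1 : 2 ∣ r + 1 := by rcases hr_odd with ⟨rr, hrr⟩; omega
  have hceven : 2 ∣ c := by
    have h1 : 2 ^ l * 2 ∣ 2 ^ l * (o1 * c) := by
      have h2 : 2 ^ (l + 1) ∣ e2 * (r + 1) := mul_dvd_mul he2 h2r1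
      rw [hc, he1o, pow_succ] at h2
      calc 2 ^ l * 2 ∣ 2 ^ l * o1 * c := h2
        _ = 2 ^ l * (o1 * c) := by ring
    have h3 : 2 ∣ o1 * c := (Nat.mul_dvd_mul_iff_left (Nat.pow_pos (n := l) (by norm_num) : (0:ℕ) < 2 ^ l)).1 h1
    rcases (Nat.Prime.dvd_mul Nat.prime_two).1 h3 with h | h
    · exfalso; rcases ho1odd with ⟨uu, huu⟩; omega
    · exact h
  obtain ⟨c', hc'⟩ := hceven
  obtain ⟨w, hw⟩ := hdvd1
  have hkey3 : e1 * f2 = 2 * (r + 1) * w := by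
    have h1 : (r - 1) * (e1 * f2) = (r - 1) * (2 * (r + 1) * w) := by
      calc (r - 1) * (e1 * f2) = (e1 * (r - 1)) * f2 := by ring
        _ = (2 * e2 * w) * f2 := by rw [hw]
        _ = 2 * (e2 * f2) * w := by ring
        _ = 2 * N * w := by rw [← hq2]
        _ = (r - 1) * (2 * (r + 1) * w) := by rw [hNfact]; ring
    exact Nat.eq_of_mul_eq_mul_left (by omega) h1
  have hEw : E * (r - 1) = e2 * w := by
    apply Nat.eq_of_mul_eq_mul_left (show 0 < 2 by norm_num)
    calc 2 * (E * (r - 1)) = (2 * E) * (r - 1) := by ring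
      _ = e1 * (r - 1) := by rw [hEe1]
      _ = 2 * e2 * w := hw
      _ = 2 * (e2 * w) := by ring
  set m := (r + 1) / 2 with hmdef
  have hm2 : 2 * m = r + 1 := by
    rcases hr_odd with ⟨rr, hrr⟩; omega
  have hcard2 : Fintype.card F / 2 = (r - 1) * m := by
    rw [hF]
    have h1 : N = 2 * ((r - 1) * m) := by rw [hNfact, ← hm2]; ring
    omega
  -- ℤ casts
  have hNz : (N : ℤ) = (e1 : ℤ) * f1 := by exact_mod_cast congrArg (Nat.cast (R := ℤ)) hq1
  have hNz2 : (N : ℤ) = (e2 : ℤ) * f2 := by exact_mod_cast congrArg (Nat.cast (R := ℤ)) hq2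
  have hrz1 : ((r - 1 : ℕ) : ℤ) = (r : ℤ) - 1 := by push_cast [hr1]; ring
  have hNfz : (N : ℤ) = ((r : ℤ) - 1) * ((r : ℤ) + 1) := by
    rw [show (N:ℤ) = ((((r-1)*(r+1) : ℕ)) : ℤ) from by exact_mod_cast congrArg (Nat.cast (R := ℤ)) hNfact]
    push_cast [hr1]
    ring
  have hcz : (e2 : ℤ) * ((r : ℤ) + 1) = (e1 : ℤ) * c := by exact_mod_cast congrArg (Nat.cast (R := ℤ)) hc
  have hwz : (e1 : ℤ) * ((r : ℤ) - 1) = 2 * (e2 : ℤ) * w := by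
    have h := congrArg (Nat.cast (R := ℤ)) hw
    push_cast [hr1] at h
    linarith
  have hkey3z : (e1 : ℤ) * f2 = 2 * ((r : ℤ) + 1) * w := by
    exact_mod_cast congrArg (Nat.cast (R := ℤ)) hkey3
  have hEwz : (E : ℤ) * ((r : ℤ) - 1) = (e2 : ℤ) * w := by
    have h := congrArg (Nat.cast (R := ℤ)) hEw
    push_cast [hr1] at h
    linarith
  have hm2z : 2 * (m : ℤ) = (r : ℤ) + 1 := by exact_mod_cast congrArg (Nat.cast (R := ℤ)) hm2
  have hcz' : (c : ℤ) = 2 * c' := by exact_mod_cast congrArg (Nat.cast (R := ℤ)) hc'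
  have hD1z : (e1 : ℤ) = (g : ℤ) * D1 := by exact_mod_cast (congrArg (Nat.cast (R := ℤ)) hD1).symm
  have hD2z : (e2 : ℤ) = (g : ℤ) * D2 := by exact_mod_cast (congrArg (Nat.cast (R := ℤ)) hD2).symm
  have hE2z : (E : ℤ) = 2 ^ (l - 1) * o1 := by exact_mod_cast congrArg (Nat.cast (R := ℤ)) hE2
  have hEe1z : 2 * (E : ℤ) = (e1 : ℤ) := by exact_mod_cast congrArg (Nat.cast (R := ℤ)) hEe1
  ------------------------------------------------------------------
  -- characteristic facts
  ------------------------------------------------------------------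
  obtain ⟨p, pk, hp_pr, hpk, hr_eq⟩ := hr_pp
  have hp' : p.Prime := Nat.prime_iff.mpr hp_pr
  obtain ⟨nn, hp0prime, hcardp⟩ := FiniteField.card F (ringChar F)
  have hp0 : ringChar F = p := by
    have h1 : ringChar F ∣ (ringChar F) ^ (nn : ℕ) := dvd_pow_self _ (by positivity)
    rw [← hcardp, hF, ← hr_eq, ← pow_mul] at h1
    have h2 : ringChar F ∣ p := hp0prime.dvd_of_dvd_pow h1
    exact (Nat.prime_dvd_prime_iff_eq hp0prime hp').1 h2
  haveI hcharp : CharP F p := hp0 ▸ ringChar.charP F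
  haveI : Fact p.Prime := ⟨hp'⟩
  have frobr : ∀ x y : F, (x - y) ^ r = x ^ r - y ^ r := by
    intro x y
    rw [← hr_eq]
    exact sub_pow_char_pow x y pk
  have natr : ∀ mm : ℕ, ((mm : F)) ^ r = mm := by
    have aux : ∀ (jj : ℕ) (x : ℕ), ((x : F)) ^ (p ^ jj) = x := by
      intro jj
      induction jj with
      | zero => intro x; simp
      | succ nj ih =>
        intro x
        rw [pow_succ, pow_mul, ih x]
        have h := map_natCast (frobenius F p) x
        rwa [frobenius_def] at h
    intro mm
    rw [← hr_eq]
    exact aux pk mm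
  have hpodd : p ≠ 2 := by
    intro h2
    subst h2
    have hpr : (2 : ℕ) ∣ r := by rw [← hr_eq]; exact dvd_pow_self 2 (by omega)
    rcases hr_odd with ⟨rr, hrr⟩
    rcases hpr with ⟨dd, hdd⟩
    omega
  have hchar2 : ringChar F ≠ 2 := by rw [hp0]; exact hpodd
  ------------------------------------------------------------------
  -- θ facts
  ------------------------------------------------------------------
  have hcardU : Fintype.card Fˣ = N := by rw [Fintype.card_units, hF]
  have horder : orderOf θ = N := by
    rw [← hcardU, ← Nat.card_eq_fintype_card]
    exact orderOf_eq_card_of_forall_mem_zpowers hθ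
  have hθ1 : ∀ z : ℤ, θ ^ z = 1 ↔ (N : ℤ) ∣ z := by
    intro z
    have h := orderOf_dvd_iff_zpow_eq_one (x := θ) (i := z)
    rw [horder] at h
    exact h.symm
  have hθeq : ∀ z zw : ℤ, (θ ^ z = θ ^ zw) ↔ (N : ℤ) ∣ (z - zw) := by
    intro z zw
    rw [← hθ1 (z - zw), zpow_sub]
    exact (mul_inv_eq_one).symm
  have hpowF : ∀ (z : ℤ) (mm : ℕ), (((θ ^ z : Fˣ) : F)) ^ mm = ((θ ^ (z * mm) : Fˣ) : F) := by
    intro z mm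
    rw [← Units.val_pow_eq_pow_val]
    congr 1
    rw [← zpow_natCast (θ ^ z) mm, ← zpow_mul]
  have χθ_even : ∀ z : ℤ, Even z → quadraticChar F ((θ ^ z : Fˣ) : F) = 1 := by
    intro z hz
    obtain ⟨y, hy⟩ := hz
    apply (quadraticChar_one_iff_isSquare (Units.ne_zero _)).2
    refine ⟨((θ ^ y : Fˣ) : F), ?_⟩
    rw [hy, zpow_add, Units.val_mul]
  ------------------------------------------------------------------
  -- primitive roots and coset membership
  ------------------------------------------------------------------
  have hprim : ∀ e f : ℕ, N = e * f → 0 < f → IsPrimitiveRoot (((θ ^ e : Fˣ)) : F) f := by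
    intro e f hef hf
    have hepos : 0 < e := by
      rcases Nat.eq_zero_or_pos e with h | h
      · rw [h] at hef; omega
      · exact h
    have horde : orderOf ((θ ^ e : Fˣ)) = f := by
      rw [orderOf_pow, horder, Nat.gcd_eq_right ⟨f, hef⟩, hef, Nat.mul_div_cancel_left f hepos]
    have h := IsPrimitiveRoot.orderOf ((θ ^ e : Fˣ))
    rw [horde] at h
    exact IsPrimitiveRoot.coe_units_iff.2 h
  have hroots : ∀ (e f : ℕ), N = e * f → 0 < f → ∀ u : F, u ∈ nthRootsFinset f (1 : F) →
      ∃ d : ℤ, u = ((θ ^ ((e : ℤ) * d) : Fˣ) : F) := by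
    intro e f hef hf u hu
    have hu1 : u ^ f = 1 := (mem_nthRootsFinset hf _).1 hu
    have hu0 : u ≠ 0 := by
      intro h0
      rw [h0, zero_pow hf.ne'] at hu1
      exact zero_ne_one hu1
    obtain ⟨z, hz⟩ := Subgroup.mem_zpowers_iff.1 (hθ (Units.mk0 u hu0))
    have hzf : θ ^ (z * (f : ℤ)) = 1 := by
      rw [zpow_mul, hz]
      apply Units.ext
      rw [zpow_natCast]
      rw [Units.val_pow_eq_pow_val, Units.val_one, Units.val_mk0]
      exact hu1
    obtain ⟨d, hd⟩ := (hθ1 _).1 hzf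
    have hfne : (f : ℤ) ≠ 0 := Int.natCast_ne_zero.2 hf.ne'
    have hzd : z = (e : ℤ) * d := by
      apply mul_right_cancel₀ hfne
      rw [hd]
      have : (N : ℤ) = (e : ℤ) * f := by exact_mod_cast congrArg (Nat.cast (R := ℤ)) hef
      rw [this]; ring
    refine ⟨d, ?_⟩
    rw [← hzd, hz, Units.val_mk0]
  have hrootsmem : ∀ (e f : ℕ), N = e * f → 0 < f → ∀ d : ℤ,
      ((θ ^ ((e : ℤ) * d) : Fˣ) : F) ∈ nthRootsFinset f (1 : F) := by
    intro e f hef hf d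
    apply (mem_nthRootsFinset hf _).2
    rw [hpowF]
    have h1 : θ ^ ((e : ℤ) * d * (f : ℕ)) = 1 := by
      apply (hθ1 _).2
      refine ⟨d, ?_⟩
      have : (N : ℤ) = (e : ℤ) * f := by exact_mod_cast congrArg (Nat.cast (R := ℤ)) hef
      rw [this]; push_cast; ring
    rw [h1, Units.val_one]
  have hmemUC : ∀ (e f : ℕ), N = e * f → 0 < f → ∀ (cu : Fˣ) (x : F),
      x ∈ unitCoset cu (Subgroup.zpowers (θ ^ e : Fˣ)) ↔
        x ∈ (nthRootsFinset f (1 : F)).image (fun u => (cu : F) * u) := by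
    intro e f hef hf cu x
    constructor
    · rintro ⟨h, hh, rfl⟩
      obtain ⟨d, hd⟩ := Subgroup.mem_zpowers_iff.1 hh
      refine Finset.mem_image.2 ⟨((h : Fˣ) : F), ?_, (Units.val_mul _ _).symm⟩
      have hform : (h : Fˣ) = θ ^ ((e : ℤ) * d) := by
        rw [← hd, ← zpow_natCast θ e, ← zpow_mul]
      rw [hform]
      exact hrootsmem e f hef hf d
    · intro hx
      obtain ⟨u, hu, rfl⟩ := Finset.mem_image.1 hx
      obtain ⟨d, hd⟩ := hroots e f hef hf u hu
      refine ⟨θ ^ ((e : ℤ) * d), Subgroup.mem_zpowers_iff.2 ⟨d, by rw [← zpow_natCast θ e, ← zpow_mul]⟩, ?_⟩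
      rw [Units.val_mul, hd]
  ------------------------------------------------------------------
  -- coset finsets
  ------------------------------------------------------------------
  set cA : Fin s → Fˣ := fun μ => (θ ^ e2 : Fˣ) ^ (i μ) with hcAdef
  set cB : Fin t → Fˣ := fun ν => (θ ^ E : Fˣ) ^ (2 * j ν + 1) with hcBdef
  set Ac : Fin s → Finset F := fun μ => (nthRootsFinset f1 (1 : F)).image (fun u => ((cA μ : F)) * u) with hAcdef
  set Bc : Fin t → Finset F := fun ν => (nthRootsFinset f2 (1 : F)).image (fun u => ((cB ν : F)) * u) with hBcdef
  have hcAz : ∀ μ, cA μ = θ ^ ((e2 : ℤ) * i μ) := by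
    intro μ
    rw [hcAdef]
    simp only []
    rw [← zpow_natCast θ e2, ← zpow_mul]
  have hcBz : ∀ ν, cB ν = θ ^ ((E : ℤ) * (2 * j ν + 1)) := by
    intro ν
    rw [hcBdef]
    simp only []
    rw [← zpow_natCast θ E, ← zpow_mul]
  have hSfin : S.toFinite.toFinset = (univ.biUnion Ac) ∪ (univ.biUnion Bc) := by
    ext x
    rw [Set.Finite.mem_toFinset, hS]
    simp only [Set.mem_union, Set.mem_iUnion, Finset.mem_union, Finset.mem_biUnion,
      Finset.mem_univ, true_and]
    exact or_congr
      (exists_congr fun μ => hmemUC e1 f1 hq1 hf1pos (cA μ) x)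
      (exists_congr fun ν => hmemUC e2 f2 hq2 hf2pos (cB ν) x)
  -- unit-exponent forms of members
  have memAc : ∀ (μ : Fin s) (x : F), x ∈ Ac μ →
      ∃ d : ℤ, x = ((θ ^ ((e2 : ℤ) * i μ + (e1 : ℤ) * d) : Fˣ) : F) := by
    intro μ x hx
    obtain ⟨u, hu, rfl⟩ := Finset.mem_image.1 hx
    obtain ⟨d, hd⟩ := hroots e1 f1 hq1 hf1pos u hu
    refine ⟨d, ?_⟩
    rw [hd, hcAz μ, ← Units.val_mul, ← zpow_add]
  have memBc : ∀ (ν : Fin t) (x : F), x ∈ Bc ν →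
      ∃ d : ℤ, x = ((θ ^ ((E : ℤ) * (2 * j ν + 1) + (e2 : ℤ) * d) : Fˣ) : F) := by
    intro ν x hx
    obtain ⟨u, hu, rfl⟩ := Finset.mem_image.1 hx
    obtain ⟨d, hd⟩ := hroots e2 f2 hq2 hf2pos u hu
    refine ⟨d, ?_⟩
    rw [hd, hcBz ν, ← Units.val_mul, ← zpow_add]
  ------------------------------------------------------------------
  -- divisibility / parity cores
  ------------------------------------------------------------------
  have hgz : (g : ℤ) ≠ 0 := Int.natCast_ne_zero.2 hgpos.ne'
  have hcopz : IsCoprime (D1 : ℤ) (D2 : ℤ) := by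
    rw [Int.isCoprime_iff_gcd_eq_one, Int.gcd_natCast_natCast]
    exact hcop
  have keyD1 : ∀ d : ℤ, (e1 : ℤ) ∣ (e2 : ℤ) * d → (D1 : ℤ) ∣ d := by
    intro d hd
    rw [hD1z, hD2z] at hd
    have h1 : ((g : ℤ)) * ((D2 : ℤ) * d) = (g : ℤ) * D2 * d := by ring
    rw [← h1] at hd
    have h2 : (D1 : ℤ) ∣ (D2 : ℤ) * d := (mul_dvd_mul_iff_left hgz).1 hd
    exact hcopz.dvd_of_dvd_mul_left h2
  have keyD2 : ∀ d : ℤ, (e2 : ℤ) ∣ (e1 : ℤ) * d → (D2 : ℤ) ∣ d := by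
    intro d hd
    rw [hD1z, hD2z] at hd
    have h1 : ((g : ℤ)) * ((D1 : ℤ) * d) = (g : ℤ) * D1 * d := by ring
    rw [← h1] at hd
    have h2 : (D2 : ℤ) ∣ (D1 : ℤ) * d := (mul_dvd_mul_iff_left hgz).1 hd
    exact hcopz.symm.dvd_of_dvd_mul_left h2
  have hiD : ∀ μ μ' : Fin s, μ ≠ μ' → ¬ ((D1 : ℤ) ∣ (i μ - i μ')) := by
    intro μ μ' hne hdvd
    refine hi μ μ' hne (Int.modEq_iff_dvd.2 ?_)
    rw [show i μ' - i μ = -(i μ - i μ') by ring]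
    exact dvd_neg.2 hdvd
  have hjD : ∀ ν ν' : Fin t, ν ≠ ν' → ¬ ((D2 : ℤ) ∣ (j ν - j ν')) := by
    intro ν ν' hne hdvd
    refine hj ν ν' hne (Int.modEq_iff_dvd.2 ?_)
    rw [show j ν' - j ν = -(j ν - j ν') by ring]
    exact dvd_neg.2 hdvd
  have oddE : ∀ z : ℤ, Odd z → ¬ ((2 : ℤ) ^ l ∣ (E : ℤ) * z) := by
    intro z hz hdvd
    rw [hE2z] at hdvd
    have hl1 : (2 : ℤ) ^ l = 2 ^ (l - 1) * 2 := by
      rw [← pow_succ]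
      congr 1
      omega
    rw [hl1] at hdvd
    have h1 : ((2 : ℤ) ^ (l - 1)) * 2 ∣ ((2 : ℤ) ^ (l - 1)) * ((o1 : ℤ) * z) := by
      have h2 : (2 : ℤ) ^ (l - 1) * (o1 : ℤ) * z = ((2 : ℤ) ^ (l - 1)) * ((o1 : ℤ) * z) := by ring
      rwa [h2] at hdvd
    have h3 : (2 : ℤ) ∣ (o1 : ℤ) * z :=
      (mul_dvd_mul_iff_left (by positivity : ((2:ℤ) ^ (l-1)) ≠ 0)).1 h1
    have h4 : Odd ((o1 : ℤ) * z) := Odd.mul (by exact_mod_cast ho1odd) hz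
    rcases h4 with ⟨yy, hyy⟩
    omega
  have h2lN : ((2 : ℤ) ^ l) ∣ (N : ℤ) := by
    have h1 : (2 : ℕ) ^ l ∣ N := dvd_trans he1_2l ⟨f1, hq1⟩
    exact_mod_cast Int.natCast_dvd_natCast.2 h1
  have h2le1 : ((2 : ℤ) ^ l) ∣ (e1 : ℤ) := by exact_mod_cast Int.natCast_dvd_natCast.2 he1_2l
  have h2le2 : ((2 : ℤ) ^ l) ∣ (e2 : ℤ) := by exact_mod_cast Int.natCast_dvd_natCast.2 he2
  ------------------------------------------------------------------
  -- disjointness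
  ------------------------------------------------------------------
  have dAA : ∀ μ μ' : Fin s, μ ≠ μ' → Disjoint (Ac μ) (Ac μ') := by
    intro μ μ' hne
    rw [Finset.disjoint_left]
    intro x h1 h2
    obtain ⟨d, hd⟩ := memAc μ x h1
    obtain ⟨d', hd'⟩ := memAc μ' x h2
    have hu : (θ ^ ((e2 : ℤ) * i μ + (e1 : ℤ) * d) : Fˣ) = θ ^ ((e2 : ℤ) * i μ' + (e1 : ℤ) * d') :=
      Units.ext (hd ▸ hd')
    have hdvd := (hθeq _ _).1 hu
    have hdvd1' : (e1 : ℤ) ∣ ((e2 : ℤ) * i μ + (e1 : ℤ) * d) - ((e2 : ℤ) * i μ' + (e1 : ℤ) * d') := by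
      refine dvd_trans ?_ hdvd
      exact ⟨f1, hNz⟩
    have hdvd2' : (e1 : ℤ) ∣ (e2 : ℤ) * (i μ - i μ') := by
      have h3 : (e2 : ℤ) * (i μ - i μ') =
          (((e2 : ℤ) * i μ + (e1 : ℤ) * d) - ((e2 : ℤ) * i μ' + (e1 : ℤ) * d')) - (e1 : ℤ) * (d - d') := by
        ring
      rw [h3]
      exact dvd_sub hdvd1' ⟨d - d', by ring⟩
    exact hiD μ μ' hne (keyD1 _ hdvd2')
  have dBB : ∀ ν ν' : Fin t, ν ≠ ν' → Disjoint (Bc ν) (Bc ν') := by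
    intro ν ν' hne
    rw [Finset.disjoint_left]
    intro x h1 h2
    obtain ⟨d, hd⟩ := memBc ν x h1
    obtain ⟨d', hd'⟩ := memBc ν' x h2
    have hu : (θ ^ ((E : ℤ) * (2 * j ν + 1) + (e2 : ℤ) * d) : Fˣ)
        = θ ^ ((E : ℤ) * (2 * j ν' + 1) + (e2 : ℤ) * d') := Units.ext (hd ▸ hd')
    have hdvd := (hθeq _ _).1 hu
    have hdvd1' : (e2 : ℤ) ∣ ((E : ℤ) * (2 * j ν + 1) + (e2 : ℤ) * d) - ((E : ℤ) * (2 * j ν' + 1) + (e2 : ℤ) * d') := by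
      refine dvd_trans ?_ hdvd
      exact ⟨f2, hNz2⟩
    have hdvd2' : (e2 : ℤ) ∣ (e1 : ℤ) * (j ν - j ν') := by
      have h3 : (e1 : ℤ) * (j ν - j ν') =
          (((E : ℤ) * (2 * j ν + 1) + (e2 : ℤ) * d) - ((E : ℤ) * (2 * j ν' + 1) + (e2 : ℤ) * d'))
          - (e2 : ℤ) * (d - d') := by
        rw [← hEe1z]; ring
      rw [h3]
      exact dvd_sub hdvd1' ⟨d - d', by ring⟩
    exact hjD ν ν' hne (keyD2 _ hdvd2')
  have dAB : ∀ (μ : Fin s) (ν : Fin t), Disjoint (Ac μ) (Bc ν) := by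
    intro μ ν
    rw [Finset.disjoint_left]
    intro x h1 h2
    obtain ⟨d, hd⟩ := memAc μ x h1
    obtain ⟨d', hd'⟩ := memBc ν x h2
    have hu : (θ ^ ((e2 : ℤ) * i μ + (e1 : ℤ) * d) : Fˣ)
        = θ ^ ((E : ℤ) * (2 * j ν + 1) + (e2 : ℤ) * d') := Units.ext (hd ▸ hd')
    have hdvd := (hθeq _ _).1 hu
    have h2l : ((2 : ℤ) ^ l) ∣ ((e2 : ℤ) * i μ + (e1 : ℤ) * d) - ((E : ℤ) * (2 * j ν + 1) + (e2 : ℤ) * d') :=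
      dvd_trans h2lN hdvd
    have h2l2 : ((2 : ℤ) ^ l) ∣ (E : ℤ) * (2 * j ν + 1) := by
      have h3 : (E : ℤ) * (2 * j ν + 1) =
          ((e2 : ℤ) * i μ + (e1 : ℤ) * d)
          - (((e2 : ℤ) * i μ + (e1 : ℤ) * d) - ((E : ℤ) * (2 * j ν + 1) + (e2 : ℤ) * d'))
          - (e2 : ℤ) * d' := by ring
      rw [h3]
      refine dvd_sub (dvd_sub ?_ h2l) (Dvd.dvd.mul_right h2le2 d')
      exact dvd_add (Dvd.dvd.mul_right h2le2 _) (Dvd.dvd.mul_right h2le1 _)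
    exact oddE (2 * j ν + 1) ⟨j ν, by ring⟩ h2l2
  ------------------------------------------------------------------
  -- the point a and its coset
  ------------------------------------------------------------------
  obtain ⟨Etwo, hEtwo⟩ := h2e2
  have hEtwoz : (e2 : ℤ) = 2 * Etwo := by exact_mod_cast congrArg (Nat.cast (R := ℤ)) hEtwo
  set a : Fˣ := (θ ^ e2 : Fˣ) ^ (i lam) * (θ ^ e1 : Fˣ) ^ k with hadef
  have haz : a = θ ^ ((e2 : ℤ) * i lam + (e1 : ℤ) * k) := by
    rw [hadef, ← zpow_natCast θ e2, ← zpow_natCast θ e1, ← zpow_mul, ← zpow_mul, ← zpow_add]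
  have hxk : ((θ ^ ((e1 : ℤ) * k) : Fˣ) : F) ∈ nthRootsFinset f1 (1 : F) := hrootsmem e1 f1 hq1 hf1pos k
  have haF : (a : F) = ((cA lam : F)) * ((θ ^ ((e1 : ℤ) * k) : Fˣ) : F) := by
    rw [hadef, Units.val_mul]
    congr 2
    rw [← zpow_natCast θ e1, ← zpow_mul]
  have haAc : (a : F) ∈ Ac lam := by
    simp only [hAcdef]
    exact Finset.mem_image.2 ⟨_, hxk, haF.symm⟩
  have hanotA : ∀ μ : Fin s, μ ≠ lam → (a : F) ∉ Ac μ := fun μ hμ hmem =>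
    (Finset.disjoint_left.1 (dAA μ lam hμ) hmem) haAc
  have hanotB : ∀ ν : Fin t, (a : F) ∉ Bc ν := fun ν hmem =>
    (Finset.disjoint_left.1 (dAB lam ν) haAc) hmem
  have hAall : univ.biUnion Ac = Ac lam ∪ (univ.erase lam).biUnion Ac := by
    conv_lhs => rw [← Finset.insert_erase (Finset.mem_univ lam)]
    rw [Finset.biUnion_insert]
  have hanotRest : (a : F) ∉ ((univ.erase lam).biUnion Ac ∪ univ.biUnion Bc) := by
    intro hmem
    rw [Finset.mem_union] at hmem
    rcases hmem with hmem | hmem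
    · obtain ⟨μ, hμ, hmemμ⟩ := Finset.mem_biUnion.1 hmem
      exact hanotA μ (Finset.ne_of_mem_erase hμ) hmemμ
    · obtain ⟨ν, _, hmemν⟩ := Finset.mem_biUnion.1 hmem
      exact hanotB ν hmemν
  have hsplit : S.toFinite.toFinset.erase (a : F) =
      ((Ac lam).erase (a : F)) ∪ (((univ.erase lam).biUnion Ac) ∪ (univ.biUnion Bc)) := by
    rw [hSfin, hAall, Finset.union_assoc, Finset.erase_union_distrib,
      Finset.erase_eq_of_notMem hanotRest]
  have hd1 : Disjoint ((Ac lam).erase (a : F))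
      (((univ.erase lam).biUnion Ac) ∪ (univ.biUnion Bc)) := by
    refine Finset.disjoint_of_subset_left (Finset.erase_subset _ _) ?_
    rw [Finset.disjoint_union_right]
    constructor
    · rw [Finset.disjoint_biUnion_right]
      intro μ hμ
      exact dAA lam μ (fun h => (Finset.ne_of_mem_erase hμ) h.symm)
    · rw [Finset.disjoint_biUnion_right]
      intro ν _
      exact dAB lam ν
  have hd2 : Disjoint ((univ.erase lam).biUnion Ac) (univ.biUnion Bc) := by
    rw [Finset.disjoint_biUnion_right]
    intro ν _
    rw [Finset.disjoint_biUnion_left]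
    intro μ _
    exact dAB μ ν
  ------------------------------------------------------------------
  -- products over the cosets
  ------------------------------------------------------------------
  have hprim1 := hprim e1 f1 hq1 hf1pos
  have hprim2 := hprim e2 f2 hq2 hf2pos
  have hPAlam : ∏ b ∈ (Ac lam).erase (a : F), ((a : F) - b) = (f1 : F) * (a : F) ^ (f1 - 1) := by
    simp only [hAcdef]
    rw [haF]
    exact coset_prod_erase hprim1 hf1pos (cA lam) ((mem_nthRootsFinset hf1pos _).1 hxk)
  have hPA : ∀ μ : Fin s, ∏ b ∈ Ac μ, ((a : F) - b) = (a : F) ^ f1 - ((cA μ : F)) ^ f1 := by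
    intro μ
    simp only [hAcdef]
    exact coset_prod hprim1 hf1pos (cA μ) (a : F)
  have hPB : ∀ ν : Fin t, ∏ b ∈ Bc ν, ((a : F) - b) = (a : F) ^ f2 - ((cB ν : F)) ^ f2 := by
    intro ν
    simp only [hBcdef]
    exact coset_prod hprim2 hf2pos (cB ν) (a : F)
  ------------------------------------------------------------------
  -- character of factor 1
  ------------------------------------------------------------------
  have hf1F : (f1 : F) ≠ 0 := by
    intro h0
    have hdvdp : p ∣ f1 := (CharP.cast_eq_zero_iff F p f1).1 h0
    have hdvdN : p ∣ N := dvd_trans hdvdp ⟨e1, by rw [hq1]; ring⟩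
    have hdvdq : p ∣ Fintype.card F := by
      rw [hcardp, hp0]; exact dvd_pow_self p (by positivity)
    have h1 : p ∣ Fintype.card F - N := Nat.dvd_sub hdvdq hdvdN
    rw [hF] at h1
    have h2 : r ^ 2 - N = 1 := by omega
    rw [h2] at h1
    have := hp'.two_le
    have := Nat.dvd_one.1 h1
    omega
  have hχa : quadraticChar F ((a : F)) = 1 := by
    rw [haz]
    apply χθ_even
    refine ⟨(Etwo : ℤ) * i lam + (E : ℤ) * k, ?_⟩
    linear_combination (i lam) * hEtwoz - k * hEe1z
  have hχfac1 : quadraticChar F ((f1 : F) * (a : F) ^ (f1 - 1)) = 1 := by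
    rw [map_mul, map_pow, hχa, one_pow, mul_one]
    apply chi_one_of_pow hchar2 hf1F
    rw [hcard2, pow_mul]
    have h1 : ((f1 : F)) ^ (r - 1) = 1 := by
      have h2 : ((f1 : F)) ^ (r - 1) * (f1 : F) = (f1 : F) ^ r := by
        rw [← pow_succ]
        congr 1
        omega
      rw [natr f1] at h2
      exact mul_right_cancel₀ hf1F (h2.trans (one_mul (f1 : F)).symm)
    rw [h1, one_pow]
  ------------------------------------------------------------------
  -- character of the other A-cosets factors
  ------------------------------------------------------------------
  have hχfac2 : ∀ μ ∈ univ.erase lam,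
      quadraticChar F ((a : F) ^ f1 - ((cA μ : F)) ^ f1) = (-1 : ℤ) ^ m := by
    intro μ hμ
    have hne : μ ≠ lam := Finset.ne_of_mem_erase hμ
    have hdnd : ¬ ((D1 : ℤ) ∣ (i μ - i lam)) := hiD μ lam hne
    set x : Fˣ := θ ^ ((e2 : ℤ) * f1 * (i μ - i lam)) with hxdef
    have u1 : a ^ f1 = θ ^ ((e2 : ℤ) * f1 * i lam) := by
      rw [haz, ← zpow_natCast (θ ^ ((e2 : ℤ) * i lam + (e1 : ℤ) * k)) f1, ← zpow_mul]
      apply (hθeq _ _).2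
      refine ⟨k, ?_⟩
      rw [hNz]; push_cast; ring
    have u2 : (cA μ) ^ f1 = θ ^ ((e2 : ℤ) * f1 * i lam) * x := by
      rw [hcAz μ, ← zpow_natCast (θ ^ ((e2 : ℤ) * i μ)) f1, ← zpow_mul, hxdef, ← zpow_add]
      congr 1
      push_cast; ring
    have hsplit2 : (a : F) ^ f1 - ((cA μ : F)) ^ f1
        = ((θ ^ ((e2 : ℤ) * f1 * i lam) : Fˣ) : F) * (1 - (x : F)) := by
      rw [← Units.val_pow_eq_pow_val, ← Units.val_pow_eq_pow_val, u1, u2, Units.val_mul]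
      ring
    rw [hsplit2, map_mul]
    have hχ1 : quadraticChar F ((θ ^ ((e2 : ℤ) * f1 * i lam) : Fˣ) : F) = 1 := by
      apply χθ_even
      refine ⟨(Etwo : ℤ) * f1 * i lam, ?_⟩
      linear_combination ((f1 : ℤ) * i lam) * hEtwoz
    rw [hχ1, one_mul]
    have hxne1 : x ≠ 1 := by
      intro h1
      rw [hxdef] at h1
      obtain ⟨dd, hdd⟩ := (hθ1 _).1 h1
      have h3 : (e1 : ℤ) ∣ (e2 : ℤ) * (i μ - i lam) := by
        refine ⟨dd, ?_⟩
        have hf1z : (f1 : ℤ) ≠ 0 := Int.natCast_ne_zero.2 hf1pos.ne'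
        apply mul_right_cancel₀ hf1z
        rw [hNz] at hdd
        linear_combination hdd
      exact hdnd (keyD1 _ h3)
    have hxF1 : (x : F) ≠ 1 := fun h => hxne1 (Units.ext (by rw [h, Units.val_one]))
    have hy0 : (1 : F) - (x : F) ≠ 0 := sub_ne_zero.2 (Ne.symm hxF1)
    have hn3 : (e2 : ℤ) * f1 * ((r : ℤ) + 1) = (N : ℤ) * c := by
      rw [hNz]
      linear_combination (f1 : ℤ) * hcz
    have hn2 : (e2 : ℤ) * f1 * m = (N : ℤ) * c' := by
      have h4 : 2 * ((e2 : ℤ) * f1 * m) = 2 * ((N : ℤ) * c') := by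
        calc 2 * ((e2 : ℤ) * f1 * m) = (e2 : ℤ) * f1 * (2 * m) := by ring
          _ = (e2 : ℤ) * f1 * ((r : ℤ) + 1) := by rw [hm2z]
          _ = (N : ℤ) * c := hn3
          _ = 2 * ((N : ℤ) * c') := by rw [hcz']; ring
      linarith
    have hxm1 : (x : F) ^ m = 1 := by
      rw [hxdef, hpowF]
      have h5 : θ ^ ((e2 : ℤ) * f1 * (i μ - i lam) * (m : ℕ)) = 1 := by
        apply (hθ1 _).2
        refine ⟨c' * (i μ - i lam), ?_⟩
        push_cast
        linear_combination (i μ - i lam) * hn2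
      rw [h5, Units.val_one]
    have hxr1 : (x : F) ^ r * (x : F) = 1 := by
      have h6 : (x : F) ^ (r + 1) = 1 := by
        rw [hxdef, hpowF]
        have h7 : θ ^ ((e2 : ℤ) * f1 * (i μ - i lam) * ((r + 1 : ℕ))) = 1 := by
          apply (hθ1 _).2
          refine ⟨c * (i μ - i lam), ?_⟩
          push_cast
          linear_combination (i μ - i lam) * hn3
        rw [h7, Units.val_one]
      rw [← h6, pow_succ]
    have hxinv : (x : F) ^ r = ((x : F))⁻¹ := eq_inv_of_mul_eq_one_left hxr1
    have hx0 : (x : F) ≠ 0 := Units.ne_zero x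
    have hpow_r1 : ((1 : F) - (x : F)) ^ (r - 1) = -((x : F))⁻¹ := by
      apply mul_right_cancel₀ hy0
      rw [← pow_succ, show r - 1 + 1 = r by omega]
      have h8 := frobr 1 (x : F)
      rw [one_pow] at h8
      rw [h8, hxinv]
      field_simp
      ring
    have hval : ((1 : F) - (x : F)) ^ (Fintype.card F / 2) = (-1 : F) ^ m := by
      rw [hcard2, pow_mul, hpow_r1,
        show -((x : F))⁻¹ = (-1) * ((x : F))⁻¹ by ring, mul_pow, inv_pow, hxm1, inv_one, mul_one]
    rcases Nat.even_or_odd m with hmE | hmO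
    · rw [Even.neg_one_pow hmE] at hval
      rw [Even.neg_one_pow hmE]
      exact chi_one_of_pow hchar2 hy0 hval
    · rw [Odd.neg_one_pow hmO] at hval
      rw [Odd.neg_one_pow hmO]
      exact chi_neg_one_of_pow hchar2 hy0 hval
  ------------------------------------------------------------------
  -- character of the B-cosets factors
  ------------------------------------------------------------------
  have hχfac3 : ∀ ν : Fin t, quadraticChar F ((a : F) ^ f2 - ((cB ν : F)) ^ f2) = 1 := by
    intro ν
    set z1 : ℤ := ((e2 : ℤ) * i lam + (e1 : ℤ) * k) * f2 with hz1def
    set z2 : ℤ := (E : ℤ) * (2 * j ν + 1) * f2 with hz2def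
    have u1 : a ^ f2 = θ ^ z1 := by
      rw [haz, ← zpow_natCast (θ ^ ((e2 : ℤ) * i lam + (e1 : ℤ) * k)) f2, ← zpow_mul, hz1def]
    have u2 : (cB ν) ^ f2 = θ ^ z2 := by
      rw [hcBz ν, ← zpow_natCast (θ ^ ((E : ℤ) * (2 * j ν + 1))) f2, ← zpow_mul, hz2def]
    have hyeq : (a : F) ^ f2 - ((cB ν : F)) ^ f2 = ((θ ^ z1 : Fˣ) : F) - ((θ ^ z2 : Fˣ) : F) := by
      rw [← Units.val_pow_eq_pow_val, ← Units.val_pow_eq_pow_val, u1, u2]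
    have hzne : (θ ^ z1 : Fˣ) ≠ θ ^ z2 := by
      intro heq
      have hdvd := (hθeq _ _).1 heq
      have hΔ : (e2 : ℤ) ∣ ((e2 : ℤ) * i lam + (e1 : ℤ) * k - (E : ℤ) * (2 * j ν + 1)) := by
        obtain ⟨dd, hdd⟩ := hdvd
        refine ⟨dd, ?_⟩
        have hf2z : (f2 : ℤ) ≠ 0 := Int.natCast_ne_zero.2 hf2pos.ne'
        apply mul_right_cancel₀ hf2z
        rw [hz1def, hz2def, hNz2] at hdd
        linear_combination hdd
      have h2lΔ : ((2 : ℤ) ^ l) ∣ (E : ℤ) * (2 * j ν + 1) := by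
        have h9 : (E : ℤ) * (2 * j ν + 1) =
            ((e2 : ℤ) * i lam + (e1 : ℤ) * k)
            - ((e2 : ℤ) * i lam + (e1 : ℤ) * k - (E : ℤ) * (2 * j ν + 1)) := by ring
        rw [h9]
        refine dvd_sub ?_ (dvd_trans h2le2 hΔ)
        exact dvd_add (Dvd.dvd.mul_right h2le2 _) (Dvd.dvd.mul_right h2le1 _)
      exact oddE _ ⟨j ν, by ring⟩ h2lΔ
    have hy0 : ((θ ^ z1 : Fˣ) : F) - ((θ ^ z2 : Fˣ) : F) ≠ 0 := by
      rw [sub_ne_zero]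
      exact fun heq => hzne (Units.ext heq)
    have hfix1 : ((θ ^ z1 : Fˣ) : F) ^ r = ((θ ^ z1 : Fˣ) : F) := by
      rw [hpowF]
      congr 1
      apply (hθeq _ _).2
      refine ⟨i lam * ((r : ℤ) - 1) + k * (2 * w), ?_⟩
      rw [hz1def]
      push_cast
      linear_combination (- (i lam) * ((r : ℤ) - 1)) * hNz2 + (k * ((r : ℤ) - 1)) * hkey3z
        + (-2 * k * (w : ℤ)) * hNfz
    have hfix2 : ((θ ^ z2 : Fˣ) : F) ^ r = ((θ ^ z2 : Fˣ) : F) := by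
      rw [hpowF]
      congr 1
      apply (hθeq _ _).2
      refine ⟨(2 * j ν + 1) * w, ?_⟩
      rw [hz2def]
      push_cast
      linear_combination ((2 * j ν + 1) * (f2 : ℤ)) * hEwz - ((2 * j ν + 1) * (w : ℤ)) * hNz2
        + ((2 * j ν + 1) * (w : ℤ)) * hNfz - ((2 * j ν + 1) * (w : ℤ)) * hNfz
    rw [hyeq]
    apply chi_one_of_pow hchar2 hy0
    rw [hcard2, pow_mul]
    have hyr : (((θ ^ z1 : Fˣ) : F) - ((θ ^ z2 : Fˣ) : F)) ^ (r - 1) = 1 := by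
      have h10 : (((θ ^ z1 : Fˣ) : F) - ((θ ^ z2 : Fˣ) : F)) ^ (r - 1)
            * (((θ ^ z1 : Fˣ) : F) - ((θ ^ z2 : Fˣ) : F))
          = 1 * (((θ ^ z1 : Fˣ) : F) - ((θ ^ z2 : Fˣ) : F)) := by
        rw [← pow_succ, show r - 1 + 1 = r by omega, frobr, hfix1, hfix2, one_mul]
      exact mul_right_cancel₀ hy0 h10
    rw [hyr, one_pow]
  ------------------------------------------------------------------
  -- assembly
  ------------------------------------------------------------------
  have hpd1 : Set.PairwiseDisjoint (↑(univ.erase lam) : Set (Fin s)) Ac :=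
    fun μ _ μ' _ hne => dAA μ μ' hne
  have hpd2 : Set.PairwiseDisjoint (↑(univ : Finset (Fin t)) : Set (Fin t)) Bc :=
    fun ν _ ν' _ hne => dBB ν ν' hne
  have hcarderase : (univ.erase lam).card = s - 1 := by
    rw [Finset.card_erase_of_mem (Finset.mem_univ lam), Finset.card_univ, Fintype.card_fin]
  rw [hsplit]
  rw [Finset.prod_union hd1]
  rw [Finset.prod_union hd2]
  rw [Finset.prod_biUnion hpd1]
  rw [Finset.prod_biUnion hpd2]
  rw [hPAlam]
  rw [Finset.prod_congr rfl (fun μ _ => hPA μ)]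
  rw [Finset.prod_congr rfl (fun ν _ => hPB ν)]
  rw [map_mul, map_mul]
  have hχf1 : quadraticChar F ((f1 : F)) = 1 := by
    apply chi_one_of_pow hchar2 hf1F
    rw [hcard2, pow_mul]
    have h1 : ((f1 : F)) ^ (r - 1) = 1 := by
      have h2 : ((f1 : F)) ^ (r - 1) * (f1 : F) = (f1 : F) ^ r := by
        rw [← pow_succ]
        congr 1
        omega
      rw [natr f1] at h2
      exact mul_right_cancel₀ hf1F (h2.trans (one_mul (f1 : F)).symm)
    rw [h1, one_pow]
  have hχapow : quadraticChar F ((a : F) ^ (f1 - 1)) = 1 := by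
    rw [map_pow, hχa, one_pow]
  rw [map_mul (quadraticChar F) (∏ μ ∈ univ.erase lam, ((a : F) ^ f1 - ((cA μ : F)) ^ f1))
      (∏ ν : Fin t, ((a : F) ^ f2 - ((cB ν : F)) ^ f2))]
  rw [map_prod (quadraticChar F) (fun μ => ((a : F) ^ f1 - ((cA μ : F)) ^ f1)) (univ.erase lam)]
  rw [map_prod (quadraticChar F) (fun ν => ((a : F) ^ f2 - ((cB ν : F)) ^ f2)) univ]
  rw [hχf1, hχapow, one_mul, one_mul]
  rw [Finset.prod_congr rfl hχfac2]
  rw [Finset.prod_congr rfl (fun ν _ => hχfac3 ν)]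
  rw [Finset.prod_const, Finset.prod_const, one_pow, mul_one, hcarderase, ← pow_mul]
  congr 1
  have h11 : (s - 1) * (r + 1) = m * (s - 1) * 2 := by rw [← hm2]; ring
  rw [h11, Nat.mul_div_cancel _ (by norm_num : 0 < 2)]
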